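/- Let X ~ Bernoulli(α) and Y ~ Bernoulli(β) be independent with 0 < β ≤ α < 1, and let λ := log((1−β)α/((1−α)β)). Then E[exp(−(λ/2)(X − Y))] = (√(αβ) + √((1−α)(1−β)))². -/

import Mathlib

/-!
With `p = α(1-β)` and `q = (1-α)β`, the parameter `λ` is `log (p / q)`, so `exp (λ/2) = √(p/q)`
and the two off-diagonal outcomes contribute `p √(q/p) + q √(p/q) = 2√(pq)`. Since
`pq = αβ · (1-α)(1-β)`, adding the diagonal outcomes `αβ + (1-α)(1-β)` completes the square.
-/

open Real

lemma exp_half_log {r : ℝ} (hr : 0 < r) : exp (log r / 2) = √r := by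
  rw [exp_half, exp_log hr]

lemma mul_exp_neg_half_log_div_add_mul_exp_half_log_div {p q : ℝ} (hp : 0 < p) (hq : 0 < q) :
    p * exp (-(log (p / q) / 2)) + q * exp (log (p / q) / 2) = 2 * √(p * q) := by
  rw [exp_neg, exp_half_log (div_pos hp hq), sqrt_div' _ hq.le, sqrt_mul hp.le]
  field_simp
  rw [sq_sqrt hp.le, sq_sqrt hq.le]
  ring

lemma sqrt_add_sqrt_sq {a b : ℝ} (ha : 0 ≤ a) (hb : 0 ≤ b) :
    (√a + √b) ^ 2 = a + b + 2 * √(a * b) := by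
  rw [add_sq, sq_sqrt ha, sq_sqrt hb, sqrt_mul ha]
  ring

/-- For independent `X ~ Bern(α)`, `Y ~ Bern(β)` with `0 < β ≤ α < 1` and
`λ = log ((1-β)α / ((1-α)β))`, the expectation `E[exp(-(λ/2)(X - Y))]`,
written out over the four outcomes, equals `(√(αβ) + √((1-α)(1-β)))²`. -/
theorem exp_moment_bernoulli_diff (α β : ℝ) (hβ : 0 < β) (hβα : β ≤ α) (hα : α < 1)
    (lam : ℝ) (hlam : lam = Real.log ((1 - β) * α / ((1 - α) * β))) :
    α * β * Real.exp (-(lam / 2) * (1 - 1))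
      + α * (1 - β) * Real.exp (-(lam / 2) * (1 - 0))
      + (1 - α) * β * Real.exp (-(lam / 2) * (0 - 1))
      + (1 - α) * (1 - β) * Real.exp (-(lam / 2) * (0 - 0))
      = (Real.sqrt (α * β) + Real.sqrt ((1 - α) * (1 - β))) ^ 2 := by
  have hα₀ : 0 < α := hβ.trans_le hβα
  have hp : 0 < α * (1 - β) := mul_pos hα₀ (by linarith)
  have hq : 0 < (1 - α) * β := mul_pos (by linarith) hβ
  have hcross := mul_exp_neg_half_log_div_add_mul_exp_half_log_div hp hq
  rw [show α * (1 - β) * ((1 - α) * β) = α * β * ((1 - α) * (1 - β)) by ring] at hcross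
  rw [sqrt_add_sqrt_sq (by positivity) (mul_pos (by linarith) (by linarith)).le, ← hcross,
    hlam, mul_comm (1 - β) α]
  simp only [sub_self, sub_zero, zero_sub, mul_zero, mul_one, mul_neg, neg_neg, exp_zero]
  ring
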